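/- arXiv:1403.7758 — 6 statements merged into one kernel-verified Lean document; each statement's English description precedes it below -/
import Mathlib

section
/- Let V be a vector space over a field K, let S and T be linear endomorphisms of V, and suppose S and T agree on a subspace M with dim(V/M) ≤ 1. If ker S is finite dimensional, then ker T is finite dimensional and |dim ker S − dim ker T| ≤ 1. -/
open Module LinearMap

private lemma aux_rank_one {K V : Type*} [Field K] [AddCommGroup V] [Module K V]
    (M N : Submodule K V) (hM : Module.rank K (V ⧸ M) ≤ 1)
    [FiniteDimensional K ↥(N ⊓ M)] :
    FiniteDimensional K N ∧ finrank K ↥(N ⊓ M) ≤ finrank K N ∧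
      finrank K N ≤ finrank K ↥(N ⊓ M) + 1 := by
  set P : Submodule K ↥N := Submodule.comap N.subtype M with hP
  have hPeq : P = Submodule.comap N.subtype (N ⊓ M) := by
    ext x; simp [hP, x.2]
  have e : P ≃ₗ[K] ↥(N ⊓ M) := hPeq ▸ Submodule.comapSubtypeEquivOfLe inf_le_left
  have hPfin : FiniteDimensional K P := Module.Finite.equiv e.symm
  -- N ⧸ P embeds into V ⧸ M
  set f : ↥N →ₗ[K] V ⧸ M := M.mkQ.comp N.subtype with hf
  have hker : LinearMap.ker f = P := by
    ext x; simp [hf, hP, Submodule.Quotient.mk_eq_zero]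
  have hq : Module.rank K (↥N ⧸ P) ≤ 1 := by
    rw [← hker]
    calc Module.rank K (↥N ⧸ LinearMap.ker f)
        = Module.rank K (LinearMap.range f) := (f.quotKerEquivRange).rank_eq
      _ ≤ Module.rank K (V ⧸ M) := Submodule.rank_le _
      _ ≤ 1 := hM
  have hfinN : FiniteDimensional K N := by
    have hlt : Module.rank K ↥N < Cardinal.aleph0 := by
      rw [← Submodule.rank_quotient_add_rank P]
      exact Cardinal.add_lt_aleph0 (hq.trans_lt Cardinal.one_lt_aleph0)
        (Module.rank_lt_aleph0_iff.mpr hPfin)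
    exact Module.rank_lt_aleph0_iff.mp hlt
  refine ⟨hfinN, ?_, ?_⟩
  · exact (e.symm.finrank_eq).le.trans (Submodule.finrank_le P)
  · have h1 : finrank K (↥N ⧸ P) + finrank K P = finrank K N :=
      Submodule.finrank_quotient_add_finrank P
    have h2 : finrank K (↥N ⧸ P) ≤ 1 := finrank_le_of_rank_le (by exact_mod_cast hq)
    have h3 : finrank K P = finrank K ↥(N ⊓ M) := e.finrank_eq
    omega

theorem rank_one_perturbation_ker_dim
    {K V : Type*} [Field K] [AddCommGroup V] [Module K V]
    (S T : V →ₗ[K] V) (M : Submodule K V)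
    (hag : ∀ x ∈ M, S x = T x)
    (hM : Module.rank K (V ⧸ M) ≤ 1)
    [FiniteDimensional K (LinearMap.ker S)] :
    FiniteDimensional K (LinearMap.ker T) ∧
      |(Module.finrank K (LinearMap.ker S) : ℤ) -
        (Module.finrank K (LinearMap.ker T) : ℤ)| ≤ 1 := by
  have heq : LinearMap.ker S ⊓ M = LinearMap.ker T ⊓ M := by
    ext x
    simp only [Submodule.mem_inf, LinearMap.mem_ker]
    constructor
    · rintro ⟨h1, h2⟩; exact ⟨(hag x h2) ▸ h1, h2⟩
    · rintro ⟨h1, h2⟩; exact ⟨(hag x h2).symm ▸ h1, h2⟩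
  have hS : FiniteDimensional K ↥(LinearMap.ker S ⊓ M) :=
    Submodule.finiteDimensional_inf_left _ _
  have hT : FiniteDimensional K ↥(LinearMap.ker T ⊓ M) := heq ▸ hS
  obtain ⟨finS, hS1, hS2⟩ := aux_rank_one M (LinearMap.ker S) hM
  obtain ⟨finT, hT1, hT2⟩ := aux_rank_one M (LinearMap.ker T) hM
  refine ⟨finT, ?_⟩
  have hrk : finrank K ↥(LinearMap.ker S ⊓ M) = finrank K ↥(LinearMap.ker T ⊓ M) := by
    rw [heq]
  rw [abs_le]
  omega
end

section
/- Let V be a vector space over a field K, let S and T be linear endomorphisms of V, and suppose S and T agree on a subspace M with dim(V/M) ≤ k for some natural number k. If ker S is finite dimensional, then ker T is finite dimensional and |dim ker S − dim ker T| ≤ k. -/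
open Module LinearMap

lemma aux_codim {K V : Type*} [Field K] [AddCommGroup V] [Module K V]
    (M : Submodule K V) (k : ℕ) (hM : Module.rank K (V ⧸ M) ≤ k)
    (W : Submodule K V) [hfin : FiniteDimensional K (M ⊓ W : Submodule K V)] :
    FiniteDimensional K W ∧
      Module.finrank K W ≤ Module.finrank K (M ⊓ W : Submodule K V) + k := by
  set f : W →ₗ[K] V ⧸ M := M.mkQ.comp W.subtype with hf
  have hker : LinearMap.ker f = Submodule.comap W.subtype M := by
    rw [hf, LinearMap.ker_comp, Submodule.ker_mkQ]
  have hcomap : Submodule.comap W.subtype M = Submodule.comap W.subtype (M ⊓ W) := by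
    simp [Submodule.comap_inf, Submodule.comap_subtype_self]
  have e : (LinearMap.ker f) ≃ₗ[K] (M ⊓ W : Submodule K V) := by
    rw [hker, hcomap]
    exact Submodule.comapSubtypeEquivOfLe inf_le_right
  have hkerfin : FiniteDimensional K (LinearMap.ker f) := e.symm.finiteDimensional
  have hrange : Module.rank K (LinearMap.range f) ≤ k :=
    le_trans (Submodule.rank_le _) hM
  have hsum : Module.rank K (LinearMap.range f) + Module.rank K (LinearMap.ker f)
      = Module.rank K W := LinearMap.rank_range_add_rank_ker f
  have hrankW : Module.rank K W ≤ Module.rank K (M ⊓ W : Submodule K V) + k := by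
    rw [← hsum, e.rank_eq, add_comm]
    exact add_le_add_right hrange _
  have hWfin : FiniteDimensional K W :=
    Module.rank_lt_aleph0_iff.mp (lt_of_le_of_lt hrankW
      (Cardinal.add_lt_aleph0 (Module.rank_lt_aleph0 _ _) (Cardinal.nat_lt_aleph0 k)))
  refine ⟨hWfin, ?_⟩
  have : ((Module.finrank K W : Cardinal) : Cardinal) ≤
      ((Module.finrank K (M ⊓ W : Submodule K V) + k : ℕ) : Cardinal) := by
    push_cast
    rw [Module.finrank_eq_rank, Module.finrank_eq_rank]
    exact hrankW
  exact_mod_cast this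

theorem rank_k_perturbation_ker_dim
    {K V : Type*} [Field K] [AddCommGroup V] [Module K V]
    (S T : V →ₗ[K] V) (M : Submodule K V) (k : ℕ)
    (hag : ∀ x ∈ M, S x = T x)
    (hM : Module.rank K (V ⧸ M) ≤ k)
    [FiniteDimensional K (LinearMap.ker S)] :
    FiniteDimensional K (LinearMap.ker T) ∧
      |(Module.finrank K (LinearMap.ker S) : ℤ) -
        (Module.finrank K (LinearMap.ker T) : ℤ)| ≤ (k : ℤ) := by
  have hNT : M ⊓ LinearMap.ker S = M ⊓ LinearMap.ker T := by
    ext x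
    simp only [Submodule.mem_inf, LinearMap.mem_ker]
    exact and_congr_right fun hx => by rw [hag x hx]
  have hfinNS : FiniteDimensional K (M ⊓ LinearMap.ker S : Submodule K V) :=
    Submodule.finiteDimensional_of_le (S₂ := LinearMap.ker S) inf_le_right
  have hS := aux_codim M k hM (LinearMap.ker S)
  have hfinNT : FiniteDimensional K (M ⊓ LinearMap.ker T : Submodule K V) := hNT ▸ hfinNS
  have hT := aux_codim M k hM (LinearMap.ker T)
  obtain ⟨hTfin, hTle⟩ := hT
  refine ⟨hTfin, ?_⟩
  obtain ⟨-, hSle⟩ := hS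
  have h1 : Module.finrank K (M ⊓ LinearMap.ker S : Submodule K V) ≤
      Module.finrank K (LinearMap.ker S) :=
    Submodule.finrank_mono inf_le_right
  have h2 : Module.finrank K (M ⊓ LinearMap.ker T : Submodule K V) ≤
      Module.finrank K (LinearMap.ker T) :=
    Submodule.finrank_mono inf_le_right
  have hNeq : Module.finrank K (M ⊓ LinearMap.ker S : Submodule K V) =
      Module.finrank K (M ⊓ LinearMap.ker T : Submodule K V) := by rw [hNT]
  rw [abs_le]
  omega
end

section
/- Let V be a vector space over a field K, let S and T be linear endomorphisms of V agreeing on a subspace M with dim(V/M) ≤ 1, and let n ≥ 1. If ker S^(n+1) / ker S^n is finite dimensional, then ker T^(n+1) / ker T^n is finite dimensional and |dim(ker S^(n+1)/ker S^n) − dim(ker T^(n+1)/ker T^n)| ≤ 1. -/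
open LinearMap Submodule Module Function


private def shiftMap (K W : Type*) [Semiring K] [AddCommMonoid W] [Module K W] (n : ℕ) :
    (Fin (n + 1) → W) →ₗ[K] (Fin (n + 1) → W) :=
  LinearMap.pi (fun j : Fin (n + 1) =>
    if h : (j : ℕ) + 1 < n + 1 then LinearMap.proj (⟨(j : ℕ) + 1, h⟩ : Fin (n + 1)) else 0)

private theorem shiftMap_apply {K W : Type*} [Semiring K] [AddCommMonoid W] [Module K W]
    (n : ℕ) (a : Fin (n + 1) → W) (j : Fin (n + 1)) :
    shiftMap K W n a j = if h : (j : ℕ) + 1 < n + 1 then a ⟨(j : ℕ) + 1, h⟩ else 0 := by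
  rw [shiftMap, LinearMap.pi_apply]
  by_cases h : (j : ℕ) + 1 < n + 1
  · rw [dif_pos h, dif_pos h]; rfl
  · rw [dif_neg h, dif_neg h]; rfl

private theorem shiftMap_ker_finrank {K W : Type*} [Field K] [AddCommGroup W] [Module K W]
    [Module.Finite K W] (n : ℕ) :
    Module.finrank K ↥(LinearMap.ker (shiftMap K W n)) ≤ Module.finrank K W := by
  set h0 : ↥(LinearMap.ker (shiftMap K W n)) →ₗ[K] W :=
    (LinearMap.proj (0 : Fin (n + 1))) ∘ₗ (LinearMap.ker (shiftMap K W n)).subtype with hh0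
  have hzero : ∀ m : ↥(LinearMap.ker (shiftMap K W n)), h0 m = 0 → m = 0 := by
    intro m hm
    have hσ0 : shiftMap K W n (m : Fin (n + 1) → W) = 0 := LinearMap.mem_ker.mp m.2
    have hm0 : (m : Fin (n + 1) → W) 0 = 0 := hm
    apply Subtype.ext
    funext j
    rcases j with ⟨jv, hj⟩
    show (m : Fin (n + 1) → W) ⟨jv, hj⟩ = 0
    cases jv with
    | zero =>
      have he : (⟨0, hj⟩ : Fin (n + 1)) = 0 := rfl
      rw [he]; exact hm0
    | succ mv =>
      have hlt : mv < n + 1 := by omega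
      have hc := congrFun hσ0 ⟨mv, hlt⟩
      rw [shiftMap_apply n (m : Fin (n + 1) → W) ⟨mv, hlt⟩,
        dif_pos (show mv + 1 < n + 1 from hj)] at hc
      exact hc
  exact LinearMap.finrank_le_finrank_of_injective ((injective_iff_map_eq_zero h0).mpr hzero)

private theorem aux_quot_le_one {K Z : Type*} [Field K] [AddCommGroup Z] [Module K Z]
    [FiniteDimensional K Z] (f : Z →ₗ[K] Z) (U U0 : Submodule K Z) (hU0U : U0 ≤ U)
    (hmap : ∀ x ∈ U, f x ∈ U0) (c : ℕ)
    (hker : Module.finrank K ↥(LinearMap.ker f) ≤ c) :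
    Module.finrank K ↥(Submodule.map U0.mkQ U) ≤ c := by
  set g1 : U →ₗ[K] Z := f ∘ₗ U.subtype with hg1
  have hrg1 : LinearMap.range g1 ≤ U0 := by
    rintro _ ⟨x, rfl⟩
    exact hmap x.1 x.2
  have hmem : ∀ y : ↥(LinearMap.ker g1), ((y : U) : Z) ∈ LinearMap.ker f := by
    intro y
    exact LinearMap.mem_ker.mp y.2
  set j1 : ↥(LinearMap.ker g1) →ₗ[K] ↥(LinearMap.ker f) :=
    LinearMap.codRestrict _ (U.subtype ∘ₗ (LinearMap.ker g1).subtype) hmem with hj1def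
  have hj1 : Function.Injective j1 := by
    intro a b hab
    exact Subtype.ext (Subtype.ext
      (congrArg (fun z : ↥(LinearMap.ker f) => (z : Z)) hab))
  have hker1 : Module.finrank K ↥(LinearMap.ker g1) ≤ c :=
    le_trans (LinearMap.finrank_le_finrank_of_injective hj1) hker
  have e1 : Module.finrank K ↥(LinearMap.range g1) + Module.finrank K ↥(LinearMap.ker g1) =
      Module.finrank K ↥U := LinearMap.finrank_range_add_finrank_ker g1
  have hle1 : Module.finrank K ↥(LinearMap.range g1) ≤ Module.finrank K ↥U0 :=
    Submodule.finrank_mono hrg1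
  set g2 : U →ₗ[K] (Z ⧸ U0) := U0.mkQ ∘ₗ U.subtype with hg2
  have e2 : Module.finrank K ↥(LinearMap.range g2) + Module.finrank K ↥(LinearMap.ker g2) =
      Module.finrank K ↥U := LinearMap.finrank_range_add_finrank_ker g2
  have hker2 : Module.finrank K ↥(LinearMap.ker g2) = Module.finrank K ↥U0 := by
    have hk : LinearMap.ker g2 = U0.comap U.subtype := by
      rw [hg2, LinearMap.ker_comp, Submodule.ker_mkQ]
    rw [hk]
    exact (Submodule.comapSubtypeEquivOfLe hU0U).finrank_eq
  have hr2 : LinearMap.range g2 = Submodule.map U0.mkQ U := by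
    rw [hg2, LinearMap.range_comp, Submodule.range_subtype]
  rw [← hr2]
  omega

set_option maxHeartbeats 2000000 in
set_option synthInstance.maxHeartbeats 1000000 in
private theorem rank_one_core {K V : Type*} [Field K] [AddCommGroup V] [Module K V]
    (S T : V →ₗ[K] V) (M : Submodule K V)
    (hag : ∀ x ∈ M, S x = T x)
    (hM : Module.rank K (V ⧸ M) ≤ 1) (n : ℕ)
    [FiniteDimensional K
      (LinearMap.ker (S ^ (n + 1)) ⧸
        (LinearMap.ker (S ^ n)).comap (LinearMap.ker (S ^ (n + 1))).subtype)] :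
    FiniteDimensional K
      (LinearMap.ker (T ^ (n + 1)) ⧸
        (LinearMap.ker (T ^ n)).comap (LinearMap.ker (T ^ (n + 1))).subtype) ∧
    Module.finrank K
      (LinearMap.ker (T ^ (n + 1)) ⧸
        (LinearMap.ker (T ^ n)).comap (LinearMap.ker (T ^ (n + 1))).subtype) ≤
    Module.finrank K
      (LinearMap.ker (S ^ (n + 1)) ⧸
        (LinearMap.ker (S ^ n)).comap (LinearMap.ker (S ^ (n + 1))).subtype) + 1 := by
  classical
  set D : V →ₗ[K] V := T - S with hD
  -- the range of D has rank ≤ 1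
  have hDM : M ≤ LinearMap.ker D := by
    intro x hx
    simp [hD, LinearMap.sub_apply, hag x hx]
  have hW : Module.rank K (LinearMap.range D) ≤ 1 := by
    have h1 : LinearMap.range (M.liftQ D hDM) = LinearMap.range D :=
      Submodule.range_liftQ M D hDM
    calc Module.rank K (LinearMap.range D)
        = Module.rank K (LinearMap.range (M.liftQ D hDM)) := by rw [h1]
      _ ≤ Module.rank K (V ⧸ M) := LinearMap.rank_le_domain _
      _ ≤ 1 := hM
  haveI hWfd : Module.Finite K (LinearMap.range D) := by
    rw [← Module.rank_lt_aleph0_iff]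
    exact lt_of_le_of_lt hW Cardinal.one_lt_aleph0
  have hW1 : Module.finrank K (LinearMap.range D) ≤ 1 :=
    Module.finrank_le_of_rank_le hW
  set K1 : Submodule K V := LinearMap.ker (T ^ (n + 1)) with hK1
  set K0' : Submodule K K1 := (LinearMap.ker (T ^ n)).comap K1.subtype with hK0'
  -- T preserves K1
  have hinv : ∀ x ∈ K1, T x ∈ K1 := by
    intro x hx
    rw [hK1, LinearMap.mem_ker] at hx ⊢
    have h2 : (T ^ (n + 1)) (T x) = T ((T ^ (n + 1)) x) := by
      rw [← Module.End.mul_apply, ← Module.End.mul_apply, ← pow_succ, ← pow_succ']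
    rw [h2, hx, map_zero]
  set TX : K1 →ₗ[K] K1 := T.restrict hinv with hTX
  set Ψ : K1 →ₗ[K] (Fin (n + 1) → (↥(LinearMap.range D))) :=
    LinearMap.pi (fun j : Fin (n + 1) =>
      D.rangeRestrict ∘ₗ ((T ^ (j : ℕ)) ∘ₗ K1.subtype)) with hΨdef
  have hΨ : ∀ (x : K1) (j : Fin (n + 1)), ((Ψ x j : V)) = D ((T ^ (j : ℕ)) (x : V)) :=
    fun x j => rfl
  set σ : (Fin (n + 1) → (↥(LinearMap.range D))) →ₗ[K] (Fin (n + 1) → (↥(LinearMap.range D))) :=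
    shiftMap K (↥(LinearMap.range D)) n with hσdef
  have hσ : ∀ (a : Fin (n + 1) → (↥(LinearMap.range D))) (j : Fin (n + 1)),
      σ a j = if h : (j : ℕ) + 1 < n + 1 then a ⟨(j : ℕ) + 1, h⟩ else 0 := by
    intro a j
    rw [hσdef]
    exact shiftMap_apply n a j
  -- commutation: σ ∘ Ψ = Ψ ∘ TX
  have hcomm : ∀ x : K1, σ (Ψ x) = Ψ (TX x) := by
    intro x
    funext j
    rw [hσ]
    by_cases h : (j : ℕ) + 1 < n + 1
    · rw [dif_pos h]
      apply Subtype.ext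
      rw [hΨ x ⟨(j : ℕ) + 1, h⟩, hΨ (TX x) j]
      have hc : ((TX x : K1) : V) = T (x : V) := T.restrict_coe_apply hinv x
      have h4 : (T ^ ((j : ℕ) + 1)) (x : V) = (T ^ (j : ℕ)) (T (x : V)) := by
        rw [pow_succ, Module.End.mul_apply]
      rw [hc, h4]
    · rw [dif_neg h]
      symm
      apply Subtype.ext
      rw [hΨ (TX x) j]
      have hc : ((TX x : K1) : V) = T (x : V) := T.restrict_coe_apply hinv x
      have hj : (j : ℕ) = n := by omega
      rw [hc, hj]
      have h3 : (T ^ n) (T (x : V)) = (T ^ (n + 1)) (x : V) := by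
        rw [pow_succ, Module.End.mul_apply]
      have hx1 : (T ^ (n + 1)) (x : V) = 0 := LinearMap.mem_ker.mp x.2
      rw [h3, hx1, map_zero]
      exact (ZeroMemClass.coe_zero _).symm
  set N : Submodule K K1 := LinearMap.ker Ψ with hNdef
  -- On N, powers of T and S agree
  have key : ∀ x : K1, x ∈ N → ∀ k, k ≤ n + 1 → (T ^ k) (x : V) = (S ^ k) (x : V) := by
    intro x hx k
    induction k with
    | zero => intro _; simp
    | succ m ih =>
      intro hk
      have hm : m ≤ n + 1 := by omega
      have hD0 : D ((T ^ m) (x : V)) = 0 := by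
        have h4 : Ψ x = 0 := LinearMap.mem_ker.mp hx
        have h5 : Ψ x ⟨m, by omega⟩ = 0 := by rw [h4]; rfl
        have := hΨ x ⟨m, by omega⟩
        rw [h5] at this
        simpa using this.symm
      have hT : ∀ y : V, T y = S y + D y := by
        intro y; simp [hD, LinearMap.sub_apply]
      calc (T ^ (m + 1)) (x : V) = T ((T ^ m) (x : V)) := by
              rw [pow_succ', Module.End.mul_apply]
        _ = S ((T ^ m) (x : V)) + D ((T ^ m) (x : V)) := hT _
        _ = S ((S ^ m) (x : V)) := by rw [hD0, add_zero, ih hm]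
        _ = (S ^ (m + 1)) (x : V) := by rw [pow_succ', Module.End.mul_apply]
  have hNS : ∀ x : K1, x ∈ N → (x : V) ∈ LinearMap.ker (S ^ (n + 1)) := by
    intro x hx
    rw [LinearMap.mem_ker, ← key x hx (n + 1) le_rfl]
    exact LinearMap.mem_ker.mp x.2
  set δ : N →ₗ[K] (LinearMap.ker (S ^ (n + 1))) :=
    LinearMap.codRestrict _ (K1.subtype ∘ₗ N.subtype) (fun y => hNS y.1 y.2) with hδdef
  set γ : N →ₗ[K]
      (LinearMap.ker (S ^ (n + 1)) ⧸
        (LinearMap.ker (S ^ n)).comap (LinearMap.ker (S ^ (n + 1))).subtype) :=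
    ((LinearMap.ker (S ^ n)).comap (LinearMap.ker (S ^ (n + 1))).subtype).mkQ ∘ₗ δ with hγdef
  set KN : Submodule K N := K0'.comap N.subtype with hKNdef
  have hkerγ : LinearMap.ker γ = KN := by
    ext y
    rw [LinearMap.mem_ker, hγdef, LinearMap.comp_apply, Submodule.mkQ_apply,
      Submodule.Quotient.mk_eq_zero, Submodule.mem_comap, Submodule.subtype_apply,
      LinearMap.mem_ker]
    have hcoe : ((δ y : LinearMap.ker (S ^ (n + 1))) : V) = ((y : K1) : V) := rfl
    rw [hcoe, ← key y.1 y.2 n (by omega)]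
    rw [hKNdef, Submodule.mem_comap, Submodule.subtype_apply, hK0', Submodule.mem_comap,
      Submodule.subtype_apply, LinearMap.mem_ker]
  -- Part 1: P = image of N in the T-quotient injects into the S-quotient
  set g3 : N →ₗ[K] (K1 ⧸ K0') := K0'.mkQ ∘ₗ N.subtype with hg3def
  have hker3 : LinearMap.ker g3 = KN := by
    rw [hg3def, LinearMap.ker_comp, Submodule.ker_mkQ, hKNdef]
  set ι := (LinearMap.ker γ).liftQ γ le_rfl with hιdef
  have hι : Injective ι := by
    rw [← LinearMap.ker_eq_bot, hιdef]
    exact Submodule.ker_liftQ_eq_bot _ _ _ le_rfl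
  set e3 : ↥(LinearMap.range g3) ≃ₗ[K] (N ⧸ LinearMap.ker γ) :=
    (LinearMap.quotKerEquivRange g3).symm.trans
      (Submodule.quotEquivOfEq (LinearMap.ker g3) (LinearMap.ker γ)
        (by rw [hker3, hkerγ])) with he3def
  set ℓ : ↥(LinearMap.range g3) →ₗ[K]
      (LinearMap.ker (S ^ (n + 1)) ⧸
        (LinearMap.ker (S ^ n)).comap (LinearMap.ker (S ^ (n + 1))).subtype) :=
    ι ∘ₗ e3.toLinearMap with hℓdef
  have hℓinj : Injective ℓ := by
    rw [hℓdef, LinearMap.coe_comp, LinearEquiv.coe_coe]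
    exact hι.comp e3.injective
  haveI : FiniteDimensional K ↥(LinearMap.range g3) :=
    FiniteDimensional.of_injective ℓ hℓinj
  have hfr3 : Module.finrank K ↥(LinearMap.range g3) ≤
      Module.finrank K
        (LinearMap.ker (S ^ (n + 1)) ⧸
          (LinearMap.ker (S ^ n)).comap (LinearMap.ker (S ^ (n + 1))).subtype) :=
    LinearMap.finrank_le_finrank_of_injective hℓinj
  set P : Submodule K (K1 ⧸ K0') := N.map K0'.mkQ with hPdef
  have hP : P = LinearMap.range g3 := by
    rw [hg3def, LinearMap.range_comp, Submodule.range_subtype, hPdef]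
  haveI hPfd : FiniteDimensional K ↥P := by rw [hP]; infer_instance
  have hfrP : Module.finrank K ↥P ≤
      Module.finrank K
        (LinearMap.ker (S ^ (n + 1)) ⧸
          (LinearMap.ker (S ^ n)).comap (LinearMap.ker (S ^ (n + 1))).subtype) := by
    rw [hP]; exact hfr3
  -- Part 2: the quotient by P has dimension ≤ 1
  set U : Submodule K (Fin (n + 1) → (↥(LinearMap.range D))) := LinearMap.range Ψ with hUdef
  set U0 : Submodule K (Fin (n + 1) → (↥(LinearMap.range D))) := K0'.map Ψ with hU0def
  have hU0U : U0 ≤ U := by rw [hU0def, hUdef]; exact LinearMap.map_le_range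
  set β : K1 →ₗ[K] ((Fin (n + 1) → (↥(LinearMap.range D))) ⧸ U0) := U0.mkQ ∘ₗ Ψ with hβdef
  have hkerβ : LinearMap.ker β = K0' ⊔ N := by
    ext x
    rw [hβdef, LinearMap.ker_comp, Submodule.ker_mkQ, Submodule.mem_comap]
    constructor
    · intro hx
      rw [hU0def] at hx
      obtain ⟨y, hy, hyx⟩ := hx
      have hxy : x - y ∈ N := by
        rw [hNdef, LinearMap.mem_ker, map_sub, hyx, sub_self]
      exact Submodule.mem_sup.mpr ⟨y, hy, x - y, hxy, by abel⟩
    · intro hx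
      obtain ⟨y, hy, z, hz, rfl⟩ := Submodule.mem_sup.mp hx
      rw [hU0def]
      refine ⟨y, hy, ?_⟩
      rw [map_add, LinearMap.mem_ker.mp hz, add_zero]
  have eqQ : ((K1 ⧸ K0') ⧸ P) ≃ₗ[K] (K1 ⧸ (K0' ⊔ N)) :=
    Submodule.quotientQuotientEquivQuotientSup K0' N
  have eqR : (K1 ⧸ (K0' ⊔ N)) ≃ₗ[K] LinearMap.range β :=
    (Submodule.quotEquivOfEq _ _ hkerβ.symm).trans (LinearMap.quotKerEquivRange β)
  -- the shift bound
  have hmapσ : ∀ x ∈ U, σ x ∈ U0 := by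
    intro x hx
    rw [hUdef] at hx
    obtain ⟨y, rfl⟩ := hx
    rw [hcomm y, hU0def]
    have hmem : TX y ∈ K0' := by
      rw [hK0', Submodule.mem_comap, Submodule.subtype_apply, LinearMap.mem_ker]
      have hc2 : ((TX y : K1) : V) = T (y : V) := T.restrict_coe_apply hinv y
      rw [hc2]
      have h3 : (T ^ n) (T (y : V)) = (T ^ (n + 1)) (y : V) := by
        rw [pow_succ, Module.End.mul_apply]
      rw [h3]
      exact LinearMap.mem_ker.mp y.2
    exact Submodule.mem_map_of_mem hmem
  have hkerσ : Module.finrank K ↥(LinearMap.ker σ) ≤ 1 := by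
    rw [hσdef]
    exact le_trans (shiftMap_ker_finrank n) hW1
  have hquot : Module.finrank K ↥(Submodule.map U0.mkQ U) ≤ 1 :=
    aux_quot_le_one σ U U0 hU0U hmapσ 1 hkerσ
  have hrange : LinearMap.range β = Submodule.map U0.mkQ U := by
    rw [hβdef, LinearMap.range_comp, hUdef]
  have hfrQ : Module.finrank K ((K1 ⧸ K0') ⧸ P) ≤ 1 := by
    rw [(eqQ.trans eqR).finrank_eq, hrange]
    exact hquot
  haveI hfdQP : FiniteDimensional K ((K1 ⧸ K0') ⧸ P) := by
    have : FiniteDimensional K ↥(LinearMap.range β) := by rw [hrange]; infer_instance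
    exact Module.Finite.equiv (eqQ.trans eqR).symm
  -- K1 ⧸ K0' is finite dimensional
  haveI hfdQT : FiniteDimensional K (K1 ⧸ K0') := by
    apply Module.finite_def.mpr
    have hm1 : (Submodule.map P.mkQ (⊤ : Submodule K (K1 ⧸ K0'))).FG := by
      rw [Submodule.map_top, Submodule.range_mkQ]
      exact Module.finite_def.mp hfdQP
    have hm2 : ((⊤ : Submodule K (K1 ⧸ K0')) ⊓ LinearMap.ker P.mkQ).FG := by
      rw [top_inf_eq, Submodule.ker_mkQ]
      exact (Submodule.fg_iff_finiteDimensional P).mpr hPfd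
    exact Submodule.fg_of_fg_map_of_fg_inf_ker P.mkQ hm1 hm2
  refine ⟨hfdQT, ?_⟩
  have hsum := Submodule.finrank_quotient_add_finrank P
  omega

theorem rank_one_perturbation_ker_quotients
    {K V : Type*} [Field K] [AddCommGroup V] [Module K V]
    (S T : V →ₗ[K] V) (M : Submodule K V)
    (hag : ∀ x ∈ M, S x = T x)
    (hM : Module.rank K (V ⧸ M) ≤ 1)
    (n : ℕ) (hn : 1 ≤ n)
    [FiniteDimensional K
      (LinearMap.ker (S ^ (n + 1)) ⧸
        (LinearMap.ker (S ^ n)).comap (LinearMap.ker (S ^ (n + 1))).subtype)] :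
    FiniteDimensional K
      (LinearMap.ker (T ^ (n + 1)) ⧸
        (LinearMap.ker (T ^ n)).comap (LinearMap.ker (T ^ (n + 1))).subtype) ∧
    |(Module.finrank K
        (LinearMap.ker (S ^ (n + 1)) ⧸
          (LinearMap.ker (S ^ n)).comap (LinearMap.ker (S ^ (n + 1))).subtype) : ℤ) -
      (Module.finrank K
        (LinearMap.ker (T ^ (n + 1)) ⧸
          (LinearMap.ker (T ^ n)).comap (LinearMap.ker (T ^ (n + 1))).subtype) : ℤ)| ≤ 1 := by
  obtain ⟨hfdT, h1⟩ := rank_one_core S T M hag hM n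
  haveI := hfdT
  obtain ⟨_, h2⟩ := rank_one_core T S M (fun x hx => (hag x hx).symm) hM n
  refine ⟨hfdT, ?_⟩
  rw [abs_le]
  constructor <;> [skip; skip] <;> omega
end

section
/- Let V be a vector space over a field K, let S and T be linear endomorphisms of V agreeing on a subspace M with dim(V/M) ≤ k, and let n ≥ 1. If ker S^n is finite dimensional, then ker T^n is finite dimensional and |dim ker S^n − dim ker T^n| ≤ k·n. -/
open Module LinearMap

theorem aux_ker_bound {K V : Type*} [Field K] [AddCommGroup V] [Module K V]
    (S T : V →ₗ[K] V) (M : Submodule K V) (k n : ℕ)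
    (hag : ∀ x ∈ M, S x = T x)
    (hM : Module.rank K (V ⧸ M) ≤ k)
    [FiniteDimensional K (LinearMap.ker (S ^ n))] :
    FiniteDimensional K (LinearMap.ker (T ^ n)) ∧
      Module.finrank K (LinearMap.ker (T ^ n)) ≤
        Module.finrank K (LinearMap.ker (S ^ n)) + k * n := by
  haveI : FiniteDimensional K (V ⧸ M) := by
    rw [FiniteDimensional, ← Module.rank_lt_aleph0_iff]
    exact lt_of_le_of_lt hM (Cardinal.nat_lt_aleph0 k)
  set A := LinearMap.ker (T ^ n) with hA
  set φ : A →ₗ[K] (Fin n → V ⧸ M) :=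
    LinearMap.pi (fun i : Fin n => M.mkQ ∘ₗ ((T ^ (i : ℕ)) ∘ₗ A.subtype)) with hφ
  -- key: elements of ker φ are killed by S ^ n
  have key : ∀ x : A, x ∈ LinearMap.ker φ → (S ^ n) (x : V) = 0 := by
    intro x hx
    have hmem : ∀ i : Fin n, (T ^ (i : ℕ)) (x : V) ∈ M := by
      intro i
      have := congrFun (LinearMap.mem_ker.mp hx) i
      simpa [hφ, Submodule.Quotient.mk_eq_zero] using this
    have hST : ∀ m ≤ n, (S ^ m) (x : V) = (T ^ m) (x : V) := by
      intro m hm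
      induction m with
      | zero => simp
      | succ m ih =>
        have hm' : m ≤ n := Nat.le_of_succ_le hm
        have h1 : (T ^ m) (x : V) ∈ M := hmem ⟨m, hm⟩
        calc (S ^ (m + 1)) (x : V) = S ((S ^ m) (x : V)) := by
              rw [pow_succ', Module.End.mul_apply]
          _ = S ((T ^ m) (x : V)) := by rw [ih hm']
          _ = T ((T ^ m) (x : V)) := hag _ h1
          _ = (T ^ (m + 1)) (x : V) := by rw [pow_succ', Module.End.mul_apply]
    have hxT : (T ^ n) (x : V) = 0 := x.2
    rw [hST n le_rfl, hxT]
  -- injection from ker φ into ker (S ^ n)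
  set e : LinearMap.ker φ →ₗ[K] LinearMap.ker (S ^ n) :=
    LinearMap.codRestrict _ (A.subtype ∘ₗ (LinearMap.ker φ).subtype)
      (fun x => LinearMap.mem_ker.mpr (key x.1 x.2)) with he
  have he_inj : Function.Injective e := by
    rw [he, ← LinearMap.ker_eq_bot, LinearMap.ker_codRestrict, LinearMap.ker_eq_bot]
    exact A.injective_subtype.comp (LinearMap.ker φ).injective_subtype
  haveI : FiniteDimensional K (LinearMap.ker φ) :=
    Module.Finite.of_injective e he_inj
  haveI : FiniteDimensional K A := by
    rw [FiniteDimensional, ← Module.rank_lt_aleph0_iff]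
    rw [← LinearMap.rank_range_add_rank_ker φ]
    exact Cardinal.add_lt_aleph0
      (lt_of_le_of_lt (Submodule.rank_le _) (Module.rank_lt_aleph0 _ _))
      (Module.rank_lt_aleph0 _ _)
  refine ⟨inferInstance, ?_⟩
  have h1 := LinearMap.finrank_range_add_finrank_ker φ
  have h2 : finrank K (LinearMap.ker φ) ≤ finrank K (LinearMap.ker (S ^ n)) :=
    LinearMap.finrank_le_finrank_of_injective he_inj
  have h3 : finrank K (LinearMap.range φ) ≤ k * n := by
    have := Submodule.finrank_le (LinearMap.range φ)
    rw [Module.finrank_pi_fintype, Finset.sum_const, Finset.card_univ, Fintype.card_fin,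
      smul_eq_mul] at this
    have hk : finrank K (V ⧸ M) ≤ k := finrank_le_of_rank_le hM
    calc finrank K (LinearMap.range φ) ≤ finrank K (V ⧸ M) * n := by
          simpa [Fintype.card_fin, mul_comm] using this
      _ ≤ k * n := Nat.mul_le_mul_right n hk
  omega

theorem rank_k_perturbation_ker_power_dim
    {K V : Type*} [Field K] [AddCommGroup V] [Module K V]
    (S T : V →ₗ[K] V) (M : Submodule K V) (k : ℕ)
    (hag : ∀ x ∈ M, S x = T x)
    (hM : Module.rank K (V ⧸ M) ≤ k)
    (n : ℕ) (hn : 1 ≤ n)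
    [FiniteDimensional K (LinearMap.ker (S ^ n))] :
    FiniteDimensional K (LinearMap.ker (T ^ n)) ∧
      |(Module.finrank K (LinearMap.ker (S ^ n)) : ℤ) -
        (Module.finrank K (LinearMap.ker (T ^ n)) : ℤ)| ≤ (k : ℤ) * n := by
  obtain ⟨hT, h1⟩ := aux_ker_bound S T M k n hag hM
  haveI := hT
  obtain ⟨-, h2⟩ := aux_ker_bound T S M k n (fun x hx => (hag x hx).symm) hM
  refine ⟨hT, ?_⟩
  rw [abs_le]
  constructor <;> push_cast <;> omega
end

section
/- Let S and T be n×n matrices over a field K with rank(S − T) ≤ k, let λ ∈ K and m ≥ 1. Then |dim(ker(S−λ)^(m+1)/ker(S−λ)^m) − dim(ker(T−λ)^(m+1)/ker(T−λ)^m)| ≤ k. -/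
set_option maxHeartbeats 1000000
set_option synthInstance.maxHeartbeats 400000

open LinearMap Submodule Module

section Aux

variable {K V : Type*} [Field K] [AddCommGroup V] [Module K V] [FiniteDimensional K V]

lemma ker_pow_mono (f : V →ₗ[K] V) (m : ℕ) : ker (f ^ m) ≤ ker (f ^ (m+1)) := by
  intro x hx
  simp only [mem_ker] at *
  rw [pow_succ', Module.End.mul_apply, hx, map_zero]

lemma rn_restrict {W : Type*} [AddCommGroup W] [Module K W] (Φ : V →ₗ[K] W)
    (p : Submodule K V) :
    finrank K p = finrank K (map Φ p) + finrank K (ker Φ ⊓ p : Submodule K V) := by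
  have h1 := LinearMap.finrank_range_add_finrank_ker (Φ.domRestrict p)
  rw [LinearMap.range_domRestrict] at h1
  have h2 : finrank K (ker (Φ.domRestrict p)) = finrank K (ker Φ ⊓ p : Submodule K V) := by
    rw [LinearMap.ker_domRestrict]
    have h3 : comap p.subtype (ker Φ) = comap p.subtype (ker Φ ⊓ p) := by
      rw [Submodule.comap_inf]
      simp
    rw [h3]
    exact (Submodule.comapSubtypeEquivOfLe inf_le_right).finrank_eq
  omega

lemma core_ineq (f g : V →ₗ[K] V) {k : ℕ}
    (hk : finrank K (range (f - g)) ≤ k) (m : ℕ) :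
    finrank K (ker (f ^ (m+1))) + finrank K (ker (g ^ m)) ≤
      finrank K (ker (g ^ (m+1))) + finrank K (ker (f ^ m)) + k := by
  set e : V →ₗ[K] V := f - g with he
  set Θ₁ : V →ₗ[K] (Fin (m+1) → V) := LinearMap.pi (fun i => e ∘ₗ f ^ (i : ℕ)) with hΘ₁
  set Θ₀ : V →ₗ[K] (Fin m → V) := LinearMap.pi (fun i => e ∘ₗ f ^ (i : ℕ)) with hΘ₀
  set Tl : (Fin (m+1) → V) →ₗ[K] (Fin m → V) :=
    LinearMap.pi (fun i => LinearMap.proj i.succ) with hTl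
  -- if Θ₁ x = 0 then powers of g and f agree on x
  have pow_eq : ∀ x : V, Θ₁ x = 0 → ∀ i : ℕ, i ≤ m + 1 → (g ^ i) x = (f ^ i) x := by
    intro x hx i
    induction i with
    | zero => simp
    | succ i ih =>
      intro hi
      have hfi : e ((f ^ i) x) = 0 := by
        have := congrFun hx ⟨i, by omega⟩
        simpa [hΘ₁, LinearMap.pi_apply] using this
      have h4 : (g ^ (i+1)) x = g ((g ^ i) x) := by rw [pow_succ', Module.End.mul_apply]
      rw [h4, ih (by omega)]
      have hg : g ((f ^ i) x) = f ((f ^ i) x) - e ((f ^ i) x) := by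
        simp [he, LinearMap.sub_apply]
      rw [hg, hfi, sub_zero, pow_succ', Module.End.mul_apply]
  have hK1le : ker Θ₁ ⊓ ker (f ^ (m+1)) ≤ ker (g ^ (m+1)) := by
    rintro x ⟨hx1, hx2⟩
    simp only [mem_ker] at *
    rw [pow_eq x hx1 (m+1) le_rfl]
    exact hx2
  have hK1K0 : (ker Θ₁ ⊓ ker (f ^ (m+1))) ⊓ ker (g ^ m) ≤ ker Θ₀ ⊓ ker (f ^ m) := by
    rintro x ⟨⟨hx1, _⟩, hx3⟩
    have hx1' : Θ₁ x = 0 := mem_ker.mp hx1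
    have hx3' : (g ^ m) x = 0 := mem_ker.mp hx3
    refine Submodule.mem_inf.mpr ⟨mem_ker.mpr ?_, mem_ker.mpr ?_⟩
    · funext i
      have := congrFun hx1' ⟨(i : ℕ), by omega⟩
      simpa [hΘ₁, hΘ₀, LinearMap.pi_apply] using this
    · rw [← pow_eq x hx1' m (by omega)]
      exact hx3'
  have hinter : Tl ∘ₗ Θ₁ = Θ₀ ∘ₗ f := by
    ext x i
    simp only [hTl, hΘ₁, hΘ₀, LinearMap.comp_apply, LinearMap.pi_apply, LinearMap.proj_apply,
      Fin.val_succ, pow_succ, Module.End.mul_apply]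
  have hfmap : map f (ker (f ^ (m+1))) ≤ ker (f ^ m) := by
    rintro _ ⟨x, hx, rfl⟩
    simp only [mem_ker] at *
    rw [← Module.End.mul_apply, ← pow_succ]
    exact hx
  have hTlmap : map Tl (map Θ₁ (ker (f ^ (m+1)))) ≤ map Θ₀ (ker (f ^ m)) := by
    rw [← Submodule.map_comp, hinter, Submodule.map_comp]
    exact Submodule.map_mono hfmap
  -- the "first coordinate" map is injective on ker Tl ⊓ I1 and lands in range e
  have hsmall : finrank K (ker Tl ⊓ map Θ₁ (ker (f ^ (m+1))) :
      Submodule K (Fin (m+1) → V)) ≤ k := by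
    set p : Submodule K (Fin (m+1) → V) := ker Tl ⊓ map Θ₁ (ker (f ^ (m+1))) with hp
    set φ : p →ₗ[K] V := (LinearMap.proj (0 : Fin (m+1))) ∘ₗ p.subtype with hφ
    have hinj : Function.Injective φ := by
      intro v w hvw
      apply Subtype.ext
      funext i
      refine Fin.cases ?_ ?_ i
      · simpa [hφ, LinearMap.proj_apply] using hvw
      · intro j
        have hv := v.2.1
        have hw := w.2.1
        replace hv : Tl (v : Fin (m+1) → V) = 0 := hv
        replace hw : Tl (w : Fin (m+1) → V) = 0 := hw
        have hv' := congrFun hv j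
        have hw' := congrFun hw j
        simp only [hTl, LinearMap.pi_apply, LinearMap.proj_apply, Pi.zero_apply] at hv' hw'
        rw [hv', hw']
    have hrange : range φ ≤ range e := by
      rintro _ ⟨⟨v, hv⟩, rfl⟩
      obtain ⟨x, _, rfl⟩ := hv.2
      refine ⟨x, ?_⟩
      simp [hφ, hΘ₁, LinearMap.pi_apply]
    calc finrank K p = finrank K (range φ) := (LinearMap.finrank_range_of_inj hinj).symm
      _ ≤ finrank K (range e) := Submodule.finrank_mono hrange
      _ ≤ k := hk
  -- dimension counting
  have e1 := rn_restrict Θ₁ (ker (f ^ (m+1)))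
  have e0 := rn_restrict Θ₀ (ker (f ^ m))
  have eI := rn_restrict Tl (map Θ₁ (ker (f ^ (m+1))))
  have hmapTl : finrank K (map Tl (map Θ₁ (ker (f ^ (m+1))))) ≤
      finrank K (map Θ₀ (ker (f ^ m))) := Submodule.finrank_mono hTlmap
  have hd := Submodule.finrank_sup_add_finrank_inf_eq
    (ker Θ₁ ⊓ ker (f ^ (m+1))) (ker (g ^ m))
  have h1 : finrank K ((ker Θ₁ ⊓ ker (f ^ (m+1))) ⊔ ker (g ^ m) : Submodule K V) ≤
      finrank K (ker (g ^ (m+1))) :=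
    Submodule.finrank_mono (sup_le hK1le (ker_pow_mono g m))
  have h2 : finrank K ((ker Θ₁ ⊓ ker (f ^ (m+1))) ⊓ ker (g ^ m) : Submodule K V) ≤
      finrank K (ker Θ₀ ⊓ ker (f ^ m) : Submodule K V) := Submodule.finrank_mono hK1K0
  omega

end Aux

theorem matrix_rank_k_perturbation_ker_quotients
    {K : Type*} [Field K] {n k : ℕ}
    (S T : Matrix (Fin n) (Fin n) K)
    (hrank : (S - T).rank ≤ k) (lam : K) (m : ℕ) (hm : 1 ≤ m) :
    |(Module.finrank K
        (LinearMap.ker ((S - lam • 1).mulVecLin ^ (m + 1)) ⧸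
          (LinearMap.ker ((S - lam • 1).mulVecLin ^ m)).comap
            (LinearMap.ker ((S - lam • 1).mulVecLin ^ (m + 1))).subtype) : ℤ) -
      (Module.finrank K
        (LinearMap.ker ((T - lam • 1).mulVecLin ^ (m + 1)) ⧸
          (LinearMap.ker ((T - lam • 1).mulVecLin ^ m)).comap
            (LinearMap.ker ((T - lam • 1).mulVecLin ^ (m + 1))).subtype) : ℤ)| ≤ (k : ℤ) := by
  set f := (S - lam • 1).mulVecLin with hf
  set g := (T - lam • 1).mulVecLin with hg
  have hfg : f - g = (S - T).mulVecLin := by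
    apply LinearMap.ext
    intro x
    show f x - g x = (S - T).mulVec x
    simp only [hf, hg, Matrix.mulVecLin_apply, Matrix.sub_mulVec]
    abel
  have hk1 : finrank K (range (f - g)) ≤ k := by
    rw [hfg]
    simpa [Matrix.rank] using hrank
  have hk2 : finrank K (range (g - f)) ≤ k := by
    rw [show g - f = -(f - g) by abel, range_neg]
    exact hk1
  have c1 := core_ineq f g hk1 m
  have c2 := core_ineq g f hk2 m
  have qf := Submodule.finrank_quotient_add_finrank
    ((LinearMap.ker (f ^ m)).comap (LinearMap.ker (f ^ (m+1))).subtype)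
  have qg := Submodule.finrank_quotient_add_finrank
    ((LinearMap.ker (g ^ m)).comap (LinearMap.ker (g ^ (m+1))).subtype)
  have hqf : finrank K ((LinearMap.ker (f ^ m)).comap (LinearMap.ker (f ^ (m+1))).subtype) =
      finrank K (LinearMap.ker (f ^ m)) :=
    (Submodule.comapSubtypeEquivOfLe (ker_pow_mono f m)).finrank_eq
  have hqg : finrank K ((LinearMap.ker (g ^ m)).comap (LinearMap.ker (g ^ (m+1))).subtype) =
      finrank K (LinearMap.ker (g ^ m)) :=
    (Submodule.comapSubtypeEquivOfLe (ker_pow_mono g m)).finrank_eq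
  rw [abs_sub_le_iff]
  omega
end

section
/- Let X = ℓ²(ℕ) × ℓ²(ℕ) and define bounded operators S(x, y) = ((y₁, x₁, x₂, ...), (y₂, y₃, ...)) and T(x, y) = ((0, x₁, x₂, ...), (y₂, y₃, ...)). Then S − T has rank one, ker S = {0}, and for every p ≥ 1, dim ker T^p = p. -/
set_option maxHeartbeats 1000000 in
theorem shift_perturbation_infinite_root_subspace
    (S T : (lp (fun _ : ℕ => ℂ) 2 × lp (fun _ : ℕ => ℂ) 2) →L[ℂ]
            (lp (fun _ : ℕ => ℂ) 2 × lp (fun _ : ℕ => ℂ) 2))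
    (hS : ∀ z : lp (fun _ : ℕ => ℂ) 2 × lp (fun _ : ℕ => ℂ) 2,
      ((S z).1 0 = z.2 0) ∧ (∀ n : ℕ, (S z).1 (n + 1) = z.1 n) ∧
        (∀ n : ℕ, (S z).2 n = z.2 (n + 1)))
    (hT : ∀ z : lp (fun _ : ℕ => ℂ) 2 × lp (fun _ : ℕ => ℂ) 2,
      ((T z).1 0 = 0) ∧ (∀ n : ℕ, (T z).1 (n + 1) = z.1 n) ∧
        (∀ n : ℕ, (T z).2 n = z.2 (n + 1))) :
    Module.finrank ℂ (LinearMap.range ((S - T : _ →L[ℂ] _) :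
        (lp (fun _ : ℕ => ℂ) 2 × lp (fun _ : ℕ => ℂ) 2) →ₗ[ℂ]
          (lp (fun _ : ℕ => ℂ) 2 × lp (fun _ : ℕ => ℂ) 2))) = 1 ∧
      LinearMap.ker (S :
        (lp (fun _ : ℕ => ℂ) 2 × lp (fun _ : ℕ => ℂ) 2) →ₗ[ℂ]
          (lp (fun _ : ℕ => ℂ) 2 × lp (fun _ : ℕ => ℂ) 2)) = ⊥ ∧
      ∀ p : ℕ, 1 ≤ p → Module.finrank ℂ (LinearMap.ker ((T ^ p : _ →L[ℂ] _) :
        (lp (fun _ : ℕ => ℂ) 2 × lp (fun _ : ℕ => ℂ) 2) →ₗ[ℂ]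
          (lp (fun _ : ℕ => ℂ) 2 × lp (fun _ : ℕ => ℂ) 2))) = p := by
  -- coordinates of T ^ p
  have hpow : ∀ (p : ℕ) (z : lp (fun _ : ℕ => ℂ) 2 × lp (fun _ : ℕ => ℂ) 2),
      (∀ k, ((T ^ p) z).1 k = if p ≤ k then z.1 (k - p) else 0) ∧
      (∀ n, ((T ^ p) z).2 n = z.2 (n + p)) := by
    intro p
    induction p with
    | zero => intro z; exact ⟨fun k => by simp, fun n => by simp⟩
    | succ p ih =>
      intro z
      have hz : (T ^ (p + 1)) z = T ((T ^ p) z) := by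
        rw [pow_succ']; rfl
      constructor
      · intro k
        rw [hz]
        cases k with
        | zero => rw [(hT _).1, if_neg (by omega)]
        | succ n =>
          rw [(hT _).2.1 n, (ih z).1 n]
          by_cases h : p ≤ n
          · have h' : p + 1 ≤ n + 1 := by omega
            have harg : n - p = n + 1 - (p + 1) := by omega
            rw [if_pos h, if_pos h', harg]
          · have h' : ¬ (p + 1 ≤ n + 1) := by omega
            rw [if_neg h, if_neg h']
      · intro n
        rw [hz, (hT _).2.2 n, (ih z).2 (n + 1)]
        have e : n + 1 + p = n + (p + 1) := by omega
        rw [e]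
  -- coordinates of S - T
  have hST : ∀ (z : lp (fun _ : ℕ => ℂ) 2 × lp (fun _ : ℕ => ℂ) 2),
      (((S - T) z).1 0 = z.2 0) ∧ (∀ n, ((S - T) z).1 (n + 1) = 0) ∧
        (∀ n, ((S - T) z).2 n = 0) := by
    intro z
    have h1 : ((S - T) z).1 = (S z).1 - (T z).1 := by
      rw [ContinuousLinearMap.sub_apply]; rfl
    have h2 : ((S - T) z).2 = (S z).2 - (T z).2 := by
      rw [ContinuousLinearMap.sub_apply]; rfl
    refine ⟨?_, fun n => ?_, fun n => ?_⟩
    · rw [h1]; simp [lp.coeFn_sub, (hS z).1, (hT z).1]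
    · rw [h1]; simp [lp.coeFn_sub, (hS z).2.1 n, (hT z).2.1 n]
    · rw [h2]; simp [lp.coeFn_sub, (hS z).2.2 n, (hT z).2.2 n]
  refine ⟨?_, ?_, ?_⟩
  · -- rank one
    set v : lp (fun _ : ℕ => ℂ) 2 × lp (fun _ : ℕ => ℂ) 2 :=
      (S - T) (0, lp.single 2 0 1) with hv
    have hv1 : v.1 0 = 1 := by
      rw [hv, (hST _).1]; simp [lp.single_apply]
    have hv1' : ∀ n, v.1 (n + 1) = 0 := fun n => (hST _).2.1 n
    have hv2 : ∀ n, v.2 n = 0 := fun n => (hST _).2.2 n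
    have hvne : v ≠ 0 := by
      intro h
      have := hv1
      rw [h] at this
      simp at this
    have hrange : LinearMap.range ((S - T : _ →L[ℂ] _) : (lp (fun _ : ℕ => ℂ) 2 × lp (fun _ : ℕ => ℂ) 2) →ₗ[ℂ] (lp (fun _ : ℕ => ℂ) 2 × lp (fun _ : ℕ => ℂ) 2)) = Submodule.span ℂ {v} := by
      apply le_antisymm
      · rintro w ⟨z, rfl⟩
        have hw : (S - T) z = z.2 0 • v := by
          apply Prod.ext
          · apply lp.ext; funext k
            have hs : (z.2 0 • v).1 k = z.2 0 * v.1 k := rfl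
            rw [hs]
            cases k with
            | zero => rw [(hST z).1, hv1, mul_one]
            | succ n => rw [(hST z).2.1 n, hv1' n, mul_zero]
          · apply lp.ext; funext n
            have hs : (z.2 0 • v).2 n = z.2 0 * v.2 n := rfl
            rw [hs, (hST z).2.2 n, hv2 n, mul_zero]
        rw [ContinuousLinearMap.coe_coe, hw]
        exact Submodule.smul_mem _ _ (Submodule.mem_span_singleton_self v)
      · rw [Submodule.span_le, Set.singleton_subset_iff]
        exact ⟨_, rfl⟩
    rw [hrange]
    exact finrank_span_singleton hvne
  · -- ker S = ⊥
    rw [LinearMap.ker_eq_bot']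
    intro z hz
    have h1 : (S z).1 = 0 := by rw [show S z = 0 from hz]; rfl
    have h2 : (S z).2 = 0 := by rw [show S z = 0 from hz]; rfl
    apply Prod.ext
    · apply lp.ext; funext n
      have := (hS z).2.1 n
      rw [h1] at this
      simpa using this.symm
    · apply lp.ext; funext n
      cases n with
      | zero =>
        have := (hS z).1
        rw [h1] at this
        simpa using this.symm
      | succ m =>
        have := (hS z).2.2 m
        rw [h2] at this
        simpa using this.symm
  · -- ker T^p
    intro p hp
    let φ : (LinearMap.ker ((T ^ p : _ →L[ℂ] _) : (lp (fun _ : ℕ => ℂ) 2 × lp (fun _ : ℕ => ℂ) 2) →ₗ[ℂ] (lp (fun _ : ℕ => ℂ) 2 × lp (fun _ : ℕ => ℂ) 2))) →ₗ[ℂ] (Fin p → ℂ) :=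
      { toFun := fun z i => z.val.2 i
        map_add' := fun z w => by
          funext i
          simp [lp.coeFn_add]
        map_smul' := fun c z => by
          funext i
          simp [lp.coeFn_smul] }
    have hinj : Function.Injective φ := by
      intro z w h
      have hcoord : ∀ i : Fin p, z.val.2 (i : ℕ) = w.val.2 (i : ℕ) :=
        fun i => congrFun h i
      have hz := z.property
      have hw := w.property
      rw [LinearMap.mem_ker, ContinuousLinearMap.coe_coe] at hz hw
      apply Subtype.ext
      apply Prod.ext
      · apply lp.ext; funext k
        have e : k + p - p = k := by omega
        have h1 : ((T ^ p) z.val).1 (k + p) = z.val.1 k := by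
          rw [(hpow p _).1 (k + p), if_pos (by omega : p ≤ k + p), e]
        have h2 : ((T ^ p) w.val).1 (k + p) = w.val.1 k := by
          rw [(hpow p _).1 (k + p), if_pos (by omega : p ≤ k + p), e]
        rw [hz] at h1; rw [hw] at h2
        have h1' : z.val.1 k = 0 := by simpa using h1.symm
        have h2' : w.val.1 k = 0 := by simpa using h2.symm
        rw [h1', h2']
      · apply lp.ext; funext n
        by_cases hn : n < p
        · exact hcoord ⟨n, hn⟩
        · have e : n - p + p = n := by omega
          have h1 : ((T ^ p) z.val).2 (n - p) = z.val.2 n := by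
            rw [(hpow p _).2 (n - p), e]
          have h2 : ((T ^ p) w.val).2 (n - p) = w.val.2 n := by
            rw [(hpow p _).2 (n - p), e]
          rw [hz] at h1; rw [hw] at h2
          have h1' : z.val.2 n = 0 := by simpa using h1.symm
          have h2' : w.val.2 n = 0 := by simpa using h2.symm
          rw [h1', h2']
    have hsurj : Function.Surjective φ := by
      intro c
      set y : lp (fun _ : ℕ => ℂ) 2 := ∑ i : Fin p, lp.single 2 (i : ℕ) (c i) with hy
      have hyapp : ∀ n : ℕ, y n = ∑ i : Fin p, if n = (i : ℕ) then c i else 0 := by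
        intro n
        rw [hy, lp.coeFn_sum]
        simp [lp.single_apply, Pi.single_apply]
      have hmem : ((0 : lp (fun _ : ℕ => ℂ) 2), y) ∈ LinearMap.ker ((T ^ p : _ →L[ℂ] _) : (lp (fun _ : ℕ => ℂ) 2 × lp (fun _ : ℕ => ℂ) 2) →ₗ[ℂ] (lp (fun _ : ℕ => ℂ) 2 × lp (fun _ : ℕ => ℂ) 2)) := by
        rw [LinearMap.mem_ker, ContinuousLinearMap.coe_coe]
        apply Prod.ext
        · apply lp.ext; funext k
          rw [(hpow p _).1 k]
          by_cases h : p ≤ k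
          · rw [if_pos h]; simp
          · rw [if_neg h]; simp
        · apply lp.ext; funext n
          rw [(hpow p _).2 n]
          have hy0 : y (n + p) = 0 := by
            rw [hyapp]
            apply Finset.sum_eq_zero
            intro i _
            rw [if_neg (by omega)]
          simpa using hy0
      refine ⟨⟨_, hmem⟩, ?_⟩
      funext i
      show y (i : ℕ) = c i
      rw [hyapp, Finset.sum_eq_single i]
      · rw [if_pos rfl]
      · intro b _ hb
        rw [if_neg (by simpa [Fin.ext_iff] using hb.symm)]
      · intro h; exact absurd (Finset.mem_univ i) h
    have hfr := LinearEquiv.finrank_eq (LinearEquiv.ofBijective φ ⟨hinj, hsurj⟩)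
    rw [hfr]
    simp
end
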